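/- Quantitative subject expansion: if M → N and π = Δ ⊢ N : α is derivable, then there is a derivation π′ = Δ ⊢ M : α with |π′| = |π| + 1. -/

import Mathlib

-- Computational and parallel types
mutual
  inductive CTy : Type
    | one : CTy
    | tens : CTy → CTy → CTy
    | arr : CTy → PTy → CTy
  inductive PTy : Type
    | ofC : CTy → PTy
    | par : PTy → PTy → PTy
end

-- Type equivalence: AC of ⊗ and ⅋, 1 neutral for ⊗
mutual
  inductive CEq : CTy → CTy → Prop
    | refl (τ) : CEq τ τ
    | symm : CEq τ ρ → CEq ρ τ
    | trans : CEq τ ρ → CEq ρ σ → CEq τ σ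
    | comm (τ ρ) : CEq (.tens τ ρ) (.tens ρ τ)
    | assoc (τ ρ σ) : CEq (.tens (.tens τ ρ) σ) (.tens τ (.tens ρ σ))
    | unit (τ) : CEq (.tens τ .one) τ
    | tensCongr : CEq τ τ' → CEq ρ ρ' → CEq (.tens τ ρ) (.tens τ' ρ')
    | arrCongr : CEq τ τ' → PEq α α' → CEq (.arr τ α) (.arr τ' α')
  inductive PEq : PTy → PTy → Prop
    | refl (α) : PEq α α
    | symm : PEq α β → PEq β α
    | trans : PEq α β → PEq β γ → PEq α γ
    | comm (α β) : PEq (.par α β) (.par β α)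
    | assoc (α β γ) : PEq (.par (.par α β) γ) (.par α (.par β γ))
    | parCongr : PEq α α' → PEq β β' → PEq (.par α β) (.par α' β')
    | ofC : CEq τ τ' → PEq (.ofC τ) (.ofC τ')
end

def Ctx : Type := ℕ → CTy
def Ctx.empty : Ctx := fun _ => CTy.one
def Ctx.tens (Γ Δ : Ctx) : Ctx := fun n => CTy.tens (Γ n) (Δ n)
def Ctx.single (x : ℕ) (τ : CTy) : Ctx := fun n => if n = x then τ else CTy.one
def Ctx.cons (τ : CTy) (Γ : Ctx) : Ctx := fun n =>
  match n with
  | 0 => τ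
  | n+1 => Γ n
def CtxEq (Γ Δ : Ctx) : Prop := ∀ n, CEq (Γ n) (Δ n)

def tensList (l : List CTy) : CTy := l.foldr CTy.tens CTy.one
def tensFin (n : ℕ) (f : Fin n → CTy) : CTy := tensList (List.ofFn f)
def tensCtxFin (n : ℕ) (Δ : Fin n → Ctx) : Ctx := fun x => tensFin n (fun i => Δ i x)

def parList : List PTy → PTy
  | [] => PTy.ofC CTy.one
  | [α] => α
  | α :: β :: rest => PTy.par α (parList (β :: rest))

def parFin (n : ℕ) (f : Fin n → PTy) : PTy := parList (List.ofFn f)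

/-- ⅋ᵏ1 : the par of k copies of 1 (left associated); junk value at 0. -/
def parOnes : ℕ → PTy
  | 0 => PTy.ofC CTy.one
  | 1 => PTy.ofC CTy.one
  | n+2 => PTy.par (parOnes (n+1)) (PTy.ofC CTy.one)

/-- Terms of Λ₊∥ in de Bruijn notation. -/
inductive Tm : Type
  | var : ℕ → Tm
  | lam : Tm → Tm
  | app : Tm → Tm → Tm
  | plus : Tm → Tm → Tm
  | par : Tm → Tm → Tm

def IsValue : Tm → Prop
  | .var _ => True
  | .lam _ => True
  | _ => False

def IsPar : Tm → Prop
  | .par _ _ => True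
  | _ => False

def shiftTm (c : ℕ) : Tm → Tm
  | .var n => if n < c then .var n else .var (n+1)
  | .lam M => .lam (shiftTm (c+1) M)
  | .app M N => .app (shiftTm c M) (shiftTm c N)
  | .plus M N => .plus (shiftTm c M) (shiftTm c N)
  | .par M N => .par (shiftTm c M) (shiftTm c N)

/-- Capture-avoiding substitution `M[V/k]` (de Bruijn). -/
def substTm : Tm → ℕ → Tm → Tm
  | .var n, k, V => if n = k then V else if k < n then .var (n-1) else .var n
  | .lam M, k, V => .lam (substTm M (k+1) (shiftTm 0 V))
  | .app M N, k, V => .app (substTm M k V) (substTm N k V)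
  | .plus M N, k, V => .plus (substTm M k V) (substTm N k V)
  | .par M N, k, V => .par (substTm M k V) (substTm N k V)

def closedUnder : ℕ → Tm → Prop
  | d, .var n => n < d
  | d, .lam M => closedUnder (d+1) M
  | d, .app M N => closedUnder d M ∧ closedUnder d N
  | d, .plus M N => closedUnder d M ∧ closedUnder d N
  | d, .par M N => closedUnder d M ∧ closedUnder d N

def Closed (M : Tm) : Prop := closedUnder 0 M

/-- One-step reduction; the boolean flag records whether a +-reduction is used. -/
inductive Step : Bool → Tm → Tm → Prop
  | beta {M V} : IsValue V → Step false (.app (.lam M) V) (substTm M 0 V)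
  | plusL (M N) : Step true (.plus M N) M
  | plusR (M N) : Step true (.plus M N) N
  | parAppL (M N P) : Step false (.app (.par M N) P) (.par (.app M P) (.app N P))
  | parAppR {V} (M N) : IsValue V → Step false (.app V (.par M N)) (.par (.app V M) (.app V N))
  | parL {b M M'} (N) : Step b M M' → Step b (.par M N) (.par M' N)
  | parR {b N N'} (M) : Step b N N' → Step b (.par M N) (.par M N')
  | appL {b M M'} (N) : Step b M M' → ¬ IsPar M → Step b (.app M N) (.app M' N)
  | appR {b M M' V} : IsValue V → Step b M M' → ¬ IsPar M → Step b (.app V M) (.app V M')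

/-- The two contracta of a single +-redex, reduced in context. -/
inductive PlusPair : Tm → Tm → Tm → Prop
  | base (M N) : PlusPair (.plus M N) M N
  | parL {M M₁ M₂} (N) : PlusPair M M₁ M₂ → PlusPair (.par M N) (.par M₁ N) (.par M₂ N)
  | parR {N N₁ N₂} (M) : PlusPair N N₁ N₂ → PlusPair (.par M N) (.par M N₁) (.par M N₂)
  | appL {M M₁ M₂} (N) : PlusPair M M₁ M₂ → ¬ IsPar M → PlusPair (.app M N) (.app M₁ N) (.app M₂ N)
  | appR {M M₁ M₂ V} : IsValue V → PlusPair M M₁ M₂ → ¬ IsPar M → PlusPair (.app V M) (.app V M₁) (.app V M₂)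

/-- n-step reduction. -/
inductive Steps : ℕ → Tm → Tm → Prop
  | refl (M) : Steps 0 M M
  | head {b M N P n} : Step b M N → Steps n N P → Steps (n+1) M P

/-- A closed term converges iff it reduces to a parallel composition of values. -/
def Converges (M : Tm) : Prop :=
  ∃ (n : ℕ) (V : Tm) (Vs : List Tm), IsValue V ∧ (∀ W ∈ Vs, IsValue W) ∧
    Steps n M (Vs.foldl Tm.par V)

/-- Typing derivations, indexed by the measure |π|. -/
inductive Deriv : Ctx → Tm → PTy → ℕ → Prop
  | ax (x : ℕ) (τ : CTy) : Deriv (Ctx.single x τ) (.var x) (.ofC τ) 0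
  | lamI (n : ℕ) (Δ : Fin n → Ctx) (τ : Fin n → CTy) (α : Fin n → PTy) (ms : Fin n → ℕ)
      (M : Tm) :
      (∀ i, Deriv (Ctx.cons (τ i) (Δ i)) M (α i) (ms i)) →
      Deriv (tensCtxFin n Δ) (.lam M)
        (.ofC (tensFin n (fun i => .arr (τ i) (α i)))) (∑ i, ms i)
  | appE (k : ℕ) (hk : 0 < k) (nf : Fin k → ℕ) (hn : ∀ i, 0 < nf i)
      (τ : ∀ i : Fin k, Fin (nf i) → CTy) (α : ∀ i : Fin k, Fin (nf i) → PTy)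
      (Δ : Ctx) (Γ : Fin k → Ctx) (m0 : ℕ) (ms : Fin k → ℕ) (M N : Tm) :
      Deriv Δ M (parFin k (fun i => .ofC (tensFin (nf i) (fun j => .arr (τ i j) (α i j))))) m0 →
      (∀ i, Deriv (Γ i) N (parFin (nf i) (fun j => .ofC (τ i j))) (ms i)) →
      Deriv (Ctx.tens Δ (tensCtxFin k Γ)) (.app M N)
        (parFin k (fun i => parFin (nf i) (α i)))
        ((m0 + (∑ i, ms i) + (∑ i, 2 * nf i)) - 1)
  | plusL {Δ M α m} (N) : Deriv Δ M α m → Deriv Δ (.plus M N) α (m+1)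
  | plusR {Δ N α m} (M) : Deriv Δ N α m → Deriv Δ (.plus M N) α (m+1)
  | parI {Δ Γ M N α β m m'} : Deriv Δ M α m → Deriv Γ N β m' →
      Deriv (Ctx.tens Δ Γ) (.par M N) (.par α β) (m + m')
  | eqv {Γ Γ' M α α' m} : Deriv Γ M α m → CtxEq Γ Γ' → PEq α α' → Deriv Γ' M α' m

def deltaTm : Tm := .lam (.app (.var 0) (.var 0))
def OmegaTm : Tm := .app deltaTm deltaTm
def Idt : Tm := .lam (.var 0)
def dstarTm : Tm := .lam (.lam (.app (.var 1) (.var 1)))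
def YstarTm : Tm := .app dstarTm dstarTm

/-!
Subject expansion is proved rule by rule; the point is the size bookkeeping.

For `(λM)V → M[V/0]`, anti-substitution splits a typing of `M[V/0]` into a typing of `M` with
`0 : σ` and a single typing of `V : σ`, the sizes adding up. The several typings of `V` occurring
in `M[V/0]` can be merged into one because a value typed `τ₁` and `τ₂` is typed `τ₁ ⊗ τ₂` at the
sum of the sizes (for an abstraction, juxtapose the `⊸I` premises). A `⊸I` followed by a
one-branch `⊸E` then adds `2·1 - 1 = 1`.

For `(M ∥ N)P → MP ∥ NP` the two `⊸E` are fused into one with the branches of both, and for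
`V(M ∥ N) → VM ∥ VN` into one whose single branch joins theirs; either way the `-1` in the size
of `⊸E` is paid once instead of twice.

A value has a `⅋`-free type, so a `⊸E` with a value in function position has a single branch:
reducing the argument of `V _` therefore costs exactly 1.
-/

theorem CEq.one_tens (τ : CTy) : CEq (.tens .one τ) τ :=
  (CEq.comm _ _).trans (CEq.unit τ)

theorem CEq.tens_ceq_one {τ ρ : CTy} (hτ : CEq τ .one) (hρ : CEq ρ .one) :
    CEq (.tens τ ρ) .one :=
  (CEq.tensCongr hτ hρ).trans (CEq.unit _)

theorem CEq.tens_tens_tens_comm (a b c d : CTy) :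
    CEq (.tens (.tens a b) (.tens c d)) (.tens (.tens a c) (.tens b d)) := by
  refine ((CEq.assoc _ _ _).symm.trans ?_).trans (CEq.assoc _ _ _)
  refine CEq.tensCongr ?_ (CEq.refl d)
  refine (CEq.assoc _ _ _).trans ((CEq.tensCongr (CEq.refl a) (CEq.comm _ _)).trans ?_)
  exact (CEq.assoc _ _ _).symm

theorem tensList_append (l₁ l₂ : List CTy) :
    CEq (tensList (l₁ ++ l₂)) (.tens (tensList l₁) (tensList l₂)) := by
  induction l₁ with
  | nil => exact (CEq.one_tens _).symm
  | cons a l ih => exact (CEq.tensCongr (CEq.refl a) ih).trans (CEq.assoc _ _ _).symm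

theorem tensFin_succ {n : ℕ} (f : Fin (n + 1) → CTy) :
    tensFin (n + 1) f = .tens (f 0) (tensFin n fun i => f i.succ) := by
  simp [tensFin, tensList, List.ofFn_succ]

theorem tensFin_congr {n : ℕ} {f g : Fin n → CTy} (h : ∀ i, CEq (f i) (g i)) :
    CEq (tensFin n f) (tensFin n g) := by
  induction n with
  | zero => exact CEq.refl _
  | succ n ih =>
    rw [tensFin_succ, tensFin_succ]
    exact CEq.tensCongr (h 0) (ih fun i => h i.succ)

theorem tensFin_ceq_one {n : ℕ} {f : Fin n → CTy} (h : ∀ i, CEq (f i) .one) :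
    CEq (tensFin n f) .one := by
  induction n with
  | zero => exact CEq.refl _
  | succ n ih =>
    rw [tensFin_succ]
    exact CEq.tens_ceq_one (h 0) (ih fun i => h i.succ)

theorem tensFin_tens {n : ℕ} (f g : Fin n → CTy) :
    CEq (tensFin n fun i => .tens (f i) (g i)) (.tens (tensFin n f) (tensFin n g)) := by
  induction n with
  | zero => exact (CEq.unit _).symm
  | succ n ih =>
    rw [tensFin_succ, tensFin_succ, tensFin_succ]
    exact (CEq.tensCongr (CEq.refl _) (ih _ _)).trans (CEq.tens_tens_tens_comm _ _ _ _)

theorem List.ofFn_comp_append {X Y : Type} {n l : ℕ} (g : X → Y) (f₁ : Fin n → X)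
    (f₂ : Fin l → X) :
    List.ofFn (fun i => g (Fin.append f₁ f₂ i)) =
      List.ofFn (fun i => g (f₁ i)) ++ List.ofFn (fun j => g (f₂ j)) := by
  change List.ofFn (g ∘ Fin.append f₁ f₂) = List.ofFn (g ∘ f₁) ++ List.ofFn (g ∘ f₂)
  rw [← List.map_ofFn, List.ofFn_fin_append, List.map_append, List.map_ofFn, List.map_ofFn]

theorem tensFin_comp_append {X : Type} {n l : ℕ} (g : X → CTy) (f₁ : Fin n → X)
    (f₂ : Fin l → X) :
    CEq (tensFin (n + l) fun i => g (Fin.append f₁ f₂ i))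
      (.tens (tensFin n fun i => g (f₁ i)) (tensFin l fun j => g (f₂ j))) := by
  unfold tensFin
  rw [List.ofFn_comp_append]
  exact tensList_append _ _

theorem parList_cons (α : PTy) {l : List PTy} (h : l ≠ []) :
    parList (α :: l) = .par α (parList l) := by
  cases l with
  | nil => exact absurd rfl h
  | cons => rfl

theorem parList_append {l₁ l₂ : List PTy} (h₁ : l₁ ≠ []) (h₂ : l₂ ≠ []) :
    PEq (parList (l₁ ++ l₂)) (.par (parList l₁) (parList l₂)) := by
  induction l₁ with
  | nil => exact absurd rfl h₁
  | cons α l ih =>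
    rcases eq_or_ne l [] with rfl | hl
    · rw [List.singleton_append, parList_cons α h₂]
      exact PEq.refl _
    · rw [List.cons_append, parList_cons α (by simp [hl]), parList_cons α hl]
      exact (PEq.parCongr (PEq.refl α) (ih hl)).trans (PEq.assoc _ _ _).symm

theorem parFin_comp_append {X : Type} {n l : ℕ} (hn : 0 < n) (hl : 0 < l) (g : X → PTy)
    (f₁ : Fin n → X) (f₂ : Fin l → X) :
    PEq (parFin (n + l) fun i => g (Fin.append f₁ f₂ i))
      (.par (parFin n fun i => g (f₁ i)) (parFin l fun j => g (f₂ j))) := by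
  unfold parFin
  rw [List.ofFn_comp_append]
  exact parList_append (by simp; omega) (by simp; omega)

theorem eq_one_of_parFin_eq_ofC {k : ℕ} (hk : 0 < k) {f : Fin k → PTy} {τ : CTy}
    (h : parFin k f = .ofC τ) : k = 1 := by
  match k, hk with
  | 1, _ => rfl
  | k + 2, _ => simp [parFin, List.ofFn_succ, parList] at h

def PTy.leaves : PTy → ℕ
  | .ofC _ => 1
  | .par α β => α.leaves + β.leaves

theorem PTy.one_le_leaves : ∀ α : PTy, 1 ≤ α.leaves
  | .ofC _ => le_rfl
  | .par α _ => le_add_right α.one_le_leaves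

def PTy.collapse : PTy → CTy
  | .ofC τ => τ
  | .par α β => .tens α.collapse β.collapse

theorem PEq.leaves_eq {α β : PTy} (h : PEq α β) : α.leaves = β.leaves :=
  PEq.rec (motive_1 := fun _ _ _ => True) (motive_2 := fun α β _ => α.leaves = β.leaves)
    (fun _ => trivial) (fun _ _ => trivial) (fun _ _ _ _ => trivial) (fun _ _ => trivial)
    (fun _ _ _ => trivial) (fun _ => trivial) (fun _ _ _ _ => trivial) (fun _ _ _ _ => trivial)
    (fun _ => rfl) (fun _ ih => ih.symm) (fun _ _ ih₁ ih₂ => ih₁.trans ih₂)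
    (fun _ _ => Nat.add_comm _ _) (fun _ _ _ => Nat.add_assoc _ _ _)
    (fun _ _ ih₁ ih₂ => by simp only [PTy.leaves, ih₁, ih₂]) (fun _ _ => rfl) h

theorem PEq.collapse_ceq {α β : PTy} (h : PEq α β) : CEq α.collapse β.collapse :=
  PEq.rec (motive_1 := fun _ _ _ => True)
    (motive_2 := fun α β _ => CEq α.collapse β.collapse)
    (fun _ => trivial) (fun _ _ => trivial) (fun _ _ _ _ => trivial) (fun _ _ => trivial)
    (fun _ _ _ => trivial) (fun _ => trivial) (fun _ _ _ _ => trivial) (fun _ _ _ _ => trivial)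
    (fun _ => CEq.refl _) (fun _ ih => ih.symm) (fun _ _ ih₁ ih₂ => ih₁.trans ih₂)
    (fun _ _ => CEq.comm _ _) (fun _ _ _ => CEq.assoc _ _ _)
    (fun _ _ ih₁ ih₂ => CEq.tensCongr ih₁ ih₂) (fun h _ => h) h

theorem PEq.ofC_inj {τ ρ : CTy} (h : PEq (.ofC τ) (.ofC ρ)) : CEq τ ρ :=
  h.collapse_ceq

theorem PEq.exists_eq_ofC {τ : CTy} {α : PTy} (h : PEq (.ofC τ) α) : ∃ ρ, α = .ofC ρ := by
  have hα := h.leaves_eq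
  cases α with
  | ofC ρ => exact ⟨ρ, rfl⟩
  | par α β =>
    have := α.one_le_leaves
    have := β.one_le_leaves
    simp only [PTy.leaves] at hα
    omega


theorem CtxEq.refl (Γ : Ctx) : CtxEq Γ Γ := fun _ => CEq.refl _

theorem CtxEq.symm {Γ Δ : Ctx} (h : CtxEq Γ Δ) : CtxEq Δ Γ := fun n => (h n).symm

theorem CtxEq.trans {Γ Δ Θ : Ctx} (h₁ : CtxEq Γ Δ) (h₂ : CtxEq Δ Θ) : CtxEq Γ Θ :=
  fun n => (h₁ n).trans (h₂ n)

theorem CtxEq.tens {Γ Γ' Δ Δ' : Ctx} (h₁ : CtxEq Γ Γ') (h₂ : CtxEq Δ Δ') :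
    CtxEq (Ctx.tens Γ Δ) (Ctx.tens Γ' Δ') := fun n => CEq.tensCongr (h₁ n) (h₂ n)

theorem Ctx.tens_tens_tens_comm (Γ₁ Γ₂ Δ₁ Δ₂ : Ctx) :
    CtxEq (Ctx.tens (Ctx.tens Γ₁ Γ₂) (Ctx.tens Δ₁ Δ₂))
      (Ctx.tens (Ctx.tens Γ₁ Δ₁) (Ctx.tens Γ₂ Δ₂)) :=
  fun _ => CEq.tens_tens_tens_comm _ _ _ _

theorem Ctx.empty_tens (Γ : Ctx) : CtxEq (Ctx.tens Ctx.empty Γ) Γ := fun _ => CEq.one_tens _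

theorem Ctx.tens_empty (Γ : Ctx) : CtxEq (Ctx.tens Γ Ctx.empty) Γ := fun _ => CEq.unit _

theorem Ctx.single_one (x : ℕ) : Ctx.single x .one = Ctx.empty := by
  funext n; simp only [Ctx.single, Ctx.empty]; split <;> rfl

theorem Ctx.single_tens (x : ℕ) (σ τ : CTy) :
    CtxEq (Ctx.single x (.tens σ τ)) (Ctx.tens (Ctx.single x σ) (Ctx.single x τ)) := by
  intro n
  simp only [Ctx.single, Ctx.tens]
  split
  · exact CEq.refl _
  · exact (CEq.unit _).symm

theorem tensCtxFin_congr {n : ℕ} {Δ Δ' : Fin n → Ctx} (h : ∀ i, CtxEq (Δ i) (Δ' i)) :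
    CtxEq (tensCtxFin n Δ) (tensCtxFin n Δ') := fun x => tensFin_congr fun i => h i x

theorem tensCtxFin_tens {n : ℕ} (Γ Θ : Fin n → Ctx) :
    CtxEq (tensCtxFin n fun i => Ctx.tens (Γ i) (Θ i))
      (Ctx.tens (tensCtxFin n Γ) (tensCtxFin n Θ)) := fun _ => tensFin_tens _ _

theorem tensCtxFin_append {n l : ℕ} (Γ : Fin n → Ctx) (Θ : Fin l → Ctx) :
    CtxEq (tensCtxFin (n + l) (Fin.append Γ Θ)) (Ctx.tens (tensCtxFin n Γ) (tensCtxFin l Θ)) :=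
  fun x => tensFin_comp_append (fun Δ : Ctx => Δ x) Γ Θ

theorem tensCtxFin_one (Γ : Fin 1 → Ctx) : CtxEq (tensCtxFin 1 Γ) (Γ 0) := fun _ => CEq.unit _

def Ctx.removeAt (c : ℕ) (Γ : Ctx) : Ctx := fun n => if n < c then Γ n else Γ (n + 1)

def Ctx.insertAt (k : ℕ) (σ : CTy) (Γ : Ctx) : Ctx :=
  fun n => if n < k then Γ n else if n = k then σ else Γ (n - 1)

theorem CtxEq.removeAt {Γ Δ : Ctx} (c : ℕ) (h : CtxEq Γ Δ) :
    CtxEq (Γ.removeAt c) (Δ.removeAt c) := by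
  intro n
  unfold Ctx.removeAt
  split
  exacts [h n, h (n + 1)]

theorem Ctx.removeAt_succ_cons (c : ℕ) (τ : CTy) (Γ : Ctx) :
    (Ctx.cons τ Γ).removeAt (c + 1) = Ctx.cons τ (Γ.removeAt c) := by
  funext n
  cases n with
  | zero => rfl
  | succ n => simp [Ctx.removeAt, Ctx.cons]

theorem Ctx.removeAt_tens (c : ℕ) (Γ Δ : Ctx) :
    (Ctx.tens Γ Δ).removeAt c = Ctx.tens (Γ.removeAt c) (Δ.removeAt c) := by
  funext n; simp only [Ctx.removeAt, Ctx.tens]; split <;> rfl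

theorem Ctx.removeAt_tensCtxFin (c n : ℕ) (Δ : Fin n → Ctx) :
    (tensCtxFin n Δ).removeAt c = tensCtxFin n fun i => (Δ i).removeAt c := by
  funext x; simp only [Ctx.removeAt, tensCtxFin]; split <;> rfl

theorem Ctx.removeAt_single_shift (c w : ℕ) (τ : CTy) :
    (Ctx.single (if w < c then w else w + 1) τ).removeAt c = Ctx.single w τ := by
  funext n
  simp only [Ctx.removeAt, Ctx.single]
  split_ifs <;> first | rfl | omega

theorem Ctx.single_shift_apply (c w : ℕ) (τ : CTy) :
    Ctx.single (if w < c then w else w + 1) τ c = .one := by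
  simp only [Ctx.single]
  split_ifs <;> first | rfl | omega

theorem Ctx.insertAt_zero (σ : CTy) (Γ : Ctx) : Γ.insertAt 0 σ = Ctx.cons σ Γ := by
  funext n; cases n <;> simp [Ctx.insertAt, Ctx.cons]

theorem Ctx.insertAt_succ (k : ℕ) (σ : CTy) (Γ : Ctx) :
    Γ.insertAt (k + 1) σ = Ctx.cons (Γ 0) ((Γ.removeAt 0).insertAt k σ) := by
  funext n
  cases n with
  | zero => rfl
  | succ n =>
    simp only [Ctx.insertAt, Ctx.cons, Ctx.removeAt]
    split_ifs <;> first | rfl | omega | (congr 1; omega)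

theorem Ctx.insertAt_tens (k : ℕ) (σ τ : CTy) (Γ Δ : Ctx) :
    Ctx.tens (Γ.insertAt k σ) (Δ.insertAt k τ) = (Ctx.tens Γ Δ).insertAt k (.tens σ τ) := by
  funext n; simp only [Ctx.insertAt, Ctx.tens]; split_ifs <;> rfl

theorem Ctx.insertAt_tensCtxFin (k n : ℕ) (σ : Fin n → CTy) (Γ : Fin n → Ctx) :
    tensCtxFin n (fun i => (Γ i).insertAt k (σ i)) = (tensCtxFin n Γ).insertAt k (tensFin n σ) := by
  funext x; simp only [Ctx.insertAt, tensCtxFin]; split_ifs <;> rfl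

theorem Ctx.insertAt_empty (k : ℕ) (σ : CTy) : Ctx.empty.insertAt k σ = Ctx.single k σ := by
  funext n; simp only [Ctx.insertAt, Ctx.single, Ctx.empty]; split_ifs <;> first | rfl | omega

theorem Ctx.insertAt_one_single {k x : ℕ} (h : x ≠ k) (τ : CTy) :
    (Ctx.single (if k < x then x - 1 else x) τ).insertAt k .one = Ctx.single x τ := by
  funext n; simp only [Ctx.insertAt, Ctx.single]; split_ifs <;> first | rfl | omega

section Inversion

variable {Δ : Ctx} {M N : Tm} {α : PTy} {m : ℕ}

theorem Deriv.congr {Γ : Ctx} {α' : PTy} {m' : ℕ} (h : Deriv Γ M α m) (hΓ : CtxEq Γ Δ)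
    (hα : PEq α α') (hm : m = m') : Deriv Δ M α' m' :=
  hm ▸ h.eqv hΓ hα

theorem Deriv.var_inv {x : ℕ} (h : Deriv Δ (.var x) α m) :
    ∃ τ, CtxEq (Ctx.single x τ) Δ ∧ PEq (.ofC τ) α ∧ m = 0 := by
  generalize hP : Tm.var x = P at h
  induction h with
  | ax y τ => cases hP; exact ⟨τ, .refl _, .refl _, rfl⟩
  | eqv _ hΓ hα ih =>
    obtain ⟨τ, h₁, h₂, rfl⟩ := ih hP
    exact ⟨τ, h₁.trans hΓ, h₂.trans hα, rfl⟩
  | lamI | appE | plusL | plusR | parI => cases hP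

theorem Deriv.lam_inv (h : Deriv Δ (.lam M) α m) :
    ∃ (n : ℕ) (Δs : Fin n → Ctx) (τ : Fin n → CTy) (β : Fin n → PTy) (ms : Fin n → ℕ),
      (∀ i, Deriv (Ctx.cons (τ i) (Δs i)) M (β i) (ms i)) ∧ CtxEq (tensCtxFin n Δs) Δ ∧
      PEq (.ofC (tensFin n fun i => .arr (τ i) (β i))) α ∧ m = ∑ i, ms i := by
  generalize hP : Tm.lam M = P at h
  induction h with
  | lamI n Δs τ β ms _ hM =>
    cases hP; exact ⟨n, Δs, τ, β, ms, hM, .refl _, .refl _, rfl⟩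
  | eqv _ hΓ hα ih =>
    obtain ⟨n, Δs, τ, β, ms, hM, h₁, h₂, rfl⟩ := ih hP
    exact ⟨n, Δs, τ, β, ms, hM, h₁.trans hΓ, h₂.trans hα, rfl⟩
  | ax | appE | plusL | plusR | parI => cases hP

theorem Deriv.app_inv (h : Deriv Δ (.app M N) α m) :
    ∃ (k : ℕ) (nf : Fin k → ℕ) (τ : ∀ i, Fin (nf i) → CTy) (β : ∀ i, Fin (nf i) → PTy)
      (Δ₀ : Ctx) (Γ : Fin k → Ctx) (m₀ : ℕ) (ms : Fin k → ℕ), 0 < k ∧ (∀ i, 0 < nf i) ∧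
      Deriv Δ₀ M (parFin k fun i => .ofC (tensFin (nf i) fun j => .arr (τ i j) (β i j))) m₀ ∧
      (∀ i, Deriv (Γ i) N (parFin (nf i) fun j => .ofC (τ i j)) (ms i)) ∧
      CtxEq (Ctx.tens Δ₀ (tensCtxFin k Γ)) Δ ∧ PEq (parFin k fun i => parFin (nf i) (β i)) α ∧
      m = m₀ + ∑ i, ms i + ∑ i, 2 * nf i - 1 := by
  generalize hP : Tm.app M N = P at h
  induction h with
  | appE k hk nf hn τ β Δ₀ Γ m₀ ms _ _ hM hN =>
    cases hP; exact ⟨k, nf, τ, β, Δ₀, Γ, m₀, ms, hk, hn, hM, hN, .refl _, .refl _, rfl⟩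
  | eqv _ hΓ hα ih =>
    obtain ⟨k, nf, τ, β, Δ₀, Γ, m₀, ms, hk, hn, hM, hN, h₁, h₂, rfl⟩ := ih hP
    exact ⟨k, nf, τ, β, Δ₀, Γ, m₀, ms, hk, hn, hM, hN, h₁.trans hΓ, h₂.trans hα, rfl⟩
  | ax | lamI | plusL | plusR | parI => cases hP

theorem Deriv.plus_inv (h : Deriv Δ (.plus M N) α m) :
    ∃ m', m = m' + 1 ∧ (Deriv Δ M α m' ∨ Deriv Δ N α m') := by
  generalize hP : Tm.plus M N = P at h
  induction h with
  | plusL _ hM => cases hP; exact ⟨_, rfl, .inl hM⟩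
  | plusR _ hN => cases hP; exact ⟨_, rfl, .inr hN⟩
  | eqv _ hΓ hα ih =>
    obtain ⟨m', rfl, hM | hN⟩ := ih hP
    exacts [⟨m', rfl, .inl (hM.eqv hΓ hα)⟩, ⟨m', rfl, .inr (hN.eqv hΓ hα)⟩]
  | ax | lamI | appE | parI => cases hP

theorem Deriv.par_inv (h : Deriv Δ (.par M N) α m) :
    ∃ Δ₁ Δ₂ α₁ α₂ m₁ m₂, Deriv Δ₁ M α₁ m₁ ∧ Deriv Δ₂ N α₂ m₂ ∧
      CtxEq (Ctx.tens Δ₁ Δ₂) Δ ∧ PEq (.par α₁ α₂) α ∧ m = m₁ + m₂ := by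
  generalize hP : Tm.par M N = P at h
  induction h with
  | parI hM hN => cases hP; exact ⟨_, _, _, _, _, _, hM, hN, .refl _, .refl _, rfl⟩
  | eqv _ hΓ hα ih =>
    obtain ⟨Δ₁, Δ₂, α₁, α₂, m₁, m₂, hM, hN, h₁, h₂, rfl⟩ := ih hP
    exact ⟨Δ₁, Δ₂, α₁, α₂, m₁, m₂, hM, hN, h₁.trans hΓ, h₂.trans hα, rfl⟩
  | ax | lamI | appE | plusL | plusR => cases hP

end Inversion

section Values

variable {V : Tm}

theorem IsValue.eq_var_or_eq_lam (hV : IsValue V) : (∃ x, V = .var x) ∨ ∃ M, V = .lam M := by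
  cases V with
  | var x => exact .inl ⟨x, rfl⟩
  | lam M => exact .inr ⟨M, rfl⟩
  | app | plus | par => exact hV.elim

theorem IsValue.shiftTm (hV : IsValue V) (c : ℕ) : IsValue (shiftTm c V) := by
  obtain ⟨x, rfl⟩ | ⟨M, rfl⟩ := hV.eq_var_or_eq_lam
  · simp only [shiftTm]; split <;> trivial
  · trivial

theorem Deriv.exists_eq_ofC_of_isValue {Δ : Ctx} {α : PTy} {m : ℕ} (h : Deriv Δ V α m)
    (hV : IsValue V) : ∃ τ, α = .ofC τ := by
  obtain ⟨x, rfl⟩ | ⟨M, rfl⟩ := hV.eq_var_or_eq_lam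
  · obtain ⟨_, -, hα, -⟩ := h.var_inv
    exact hα.exists_eq_ofC
  · obtain ⟨_, _, _, _, _, -, -, hα, -⟩ := h.lam_inv
    exact hα.exists_eq_ofC

theorem Deriv.eq_one_of_isValue {Δ : Ctx} {k m : ℕ} {f : Fin k → PTy} (hk : 0 < k)
    (h : Deriv Δ V (parFin k f) m) (hV : IsValue V) : k = 1 :=
  have ⟨_, hf⟩ := h.exists_eq_ofC_of_isValue hV
  eq_one_of_parFin_eq_ofC hk hf

theorem Deriv.one_of_isValue (hV : IsValue V) : Deriv Ctx.empty V (.ofC .one) 0 := by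
  obtain ⟨x, rfl⟩ | ⟨M, rfl⟩ := hV.eq_var_or_eq_lam
  · exact Ctx.single_one x ▸ Deriv.ax x .one
  · exact (Deriv.lamI 0 Fin.elim0 Fin.elim0 Fin.elim0 Fin.elim0 M (fun i => i.elim0)).congr
      (CtxEq.refl _) (PEq.refl _) (by simp)

theorem Deriv.tens_of_isValue {Θ₁ Θ₂ : Ctx} {τ₁ τ₂ : CTy} {m₁ m₂ : ℕ} (hV : IsValue V)
    (h₁ : Deriv Θ₁ V (.ofC τ₁) m₁) (h₂ : Deriv Θ₂ V (.ofC τ₂) m₂) :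
    Deriv (Ctx.tens Θ₁ Θ₂) V (.ofC (.tens τ₁ τ₂)) (m₁ + m₂) := by
  obtain ⟨x, rfl⟩ | ⟨M, rfl⟩ := hV.eq_var_or_eq_lam
  · obtain ⟨σ₁, hΘ₁, hσ₁, rfl⟩ := h₁.var_inv
    obtain ⟨σ₂, hΘ₂, hσ₂, rfl⟩ := h₂.var_inv
    exact (Deriv.ax x _).congr ((Ctx.single_tens x σ₁ σ₂).trans (hΘ₁.tens hΘ₂))
      (.ofC (.tensCongr hσ₁.ofC_inj hσ₂.ofC_inj)) rfl
  · obtain ⟨n₁, Δ₁, ρ₁, β₁, ms₁, hM₁, hΔ₁, hα₁, rfl⟩ := h₁.lam_inv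
    obtain ⟨n₂, Δ₂, ρ₂, β₂, ms₂, hM₂, hΔ₂, hα₂, rfl⟩ := h₂.lam_inv
    let p := Fin.append (fun i => (ρ₁ i, β₁ i)) (fun i => (ρ₂ i, β₂ i))
    have hM : ∀ i, Deriv (Ctx.cons (p i).1 (Fin.append Δ₁ Δ₂ i)) M (p i).2
        (Fin.append ms₁ ms₂ i) :=
      Fin.addCases (fun i => by simpa [p] using hM₁ i) (fun i => by simpa [p] using hM₂ i)
    refine (Deriv.lamI _ _ _ _ _ M hM).congr ((tensCtxFin_append Δ₁ Δ₂).trans (hΔ₁.tens hΔ₂))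
      (.ofC ?_) (by simp [Fin.sum_univ_add])
    exact (tensFin_comp_append (fun q : CTy × PTy => .arr q.1 q.2) _ _).trans
      (.tensCongr hα₁.ofC_inj hα₂.ofC_inj)

theorem tensCtxFin_succ {n : ℕ} (Θ : Fin (n + 1) → Ctx) :
    tensCtxFin (n + 1) Θ = Ctx.tens (Θ 0) (tensCtxFin n fun i => Θ i.succ) := by
  funext x; exact tensFin_succ _

theorem Deriv.tensFin_of_isValue (hV : IsValue V) {n : ℕ} {Θ : Fin n → Ctx} {σ : Fin n → CTy}
    {ms : Fin n → ℕ} (h : ∀ i, Deriv (Θ i) V (.ofC (σ i)) (ms i)) :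
    Deriv (tensCtxFin n Θ) V (.ofC (tensFin n σ)) (∑ i, ms i) := by
  induction n with
  | zero => exact (Deriv.one_of_isValue hV).congr (CtxEq.refl _) (PEq.refl _) (by simp)
  | succ n ih =>
    rw [tensCtxFin_succ, tensFin_succ, Fin.sum_univ_succ]
    exact (h 0).tens_of_isValue hV (ih fun i => h i.succ)

end Values

theorem shiftTm_var (c w : ℕ) : shiftTm c (.var w) = .var (if w < c then w else w + 1) := by
  simp only [shiftTm]; split <;> rfl

theorem Deriv.of_shiftTm {W : Tm} {c : ℕ} {Θ : Ctx} {β : PTy} {m : ℕ}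
    (h : Deriv Θ (shiftTm c W) β m) : Deriv (Θ.removeAt c) W β m ∧ CEq (Θ c) .one := by
  induction W generalizing c Θ β m with
  | var w =>
    rw [shiftTm_var] at h
    obtain ⟨τ, hΘ, hβ, rfl⟩ := h.var_inv
    have hc := hΘ c
    rw [Ctx.single_shift_apply] at hc
    refine ⟨(Deriv.ax w τ).congr ?_ hβ rfl, hc.symm⟩
    rw [← Ctx.removeAt_single_shift c]
    exact hΘ.removeAt c
  | lam W ih =>
    obtain ⟨n, Δs, τ, γ, ms, hW, hΘ, hβ, rfl⟩ := h.lam_inv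
    refine ⟨(Deriv.lamI n (fun i => (Δs i).removeAt c) τ γ ms W fun i => ?_).congr ?_ hβ rfl,
      (hΘ c).symm.trans (tensFin_ceq_one fun i => (ih (hW i)).2)⟩
    · simpa only [Ctx.removeAt_succ_cons] using (ih (hW i)).1
    · rw [← Ctx.removeAt_tensCtxFin]
      exact hΘ.removeAt c
  | app W₁ W₂ ih₁ ih₂ =>
    obtain ⟨k, nf, τ, γ, Δ₀, Γ, m₀, ms, hk, hnf, hW₁, hW₂, hΘ, hβ, rfl⟩ := h.app_inv
    refine ⟨(Deriv.appE k hk nf hnf τ γ _ (fun i => (Γ i).removeAt c) m₀ ms W₁ W₂ (ih₁ hW₁).1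
      fun i => (ih₂ (hW₂ i)).1).congr ?_ hβ rfl, (hΘ c).symm.trans
      (.tens_ceq_one (ih₁ hW₁).2 (tensFin_ceq_one fun i => (ih₂ (hW₂ i)).2))⟩
    rw [← Ctx.removeAt_tensCtxFin, ← Ctx.removeAt_tens]
    exact hΘ.removeAt c
  | plus W₁ W₂ ih₁ ih₂ =>
    obtain ⟨m, rfl, h | h⟩ := h.plus_inv
    · exact ⟨.plusL W₂ (ih₁ h).1, (ih₁ h).2⟩
    · exact ⟨.plusR W₁ (ih₂ h).1, (ih₂ h).2⟩
  | par W₁ W₂ ih₁ ih₂ =>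
    obtain ⟨Δ₁, Δ₂, β₁, β₂, m₁, m₂, h₁, h₂, hΘ, hβ, rfl⟩ := h.par_inv
    refine ⟨(Deriv.parI (ih₁ h₁).1 (ih₂ h₂).1).congr ?_ hβ rfl,
      (hΘ c).symm.trans (.tens_ceq_one (ih₁ h₁).2 (ih₂ h₂).2)⟩
    rw [← Ctx.removeAt_tens]
    exact hΘ.removeAt c

def AntiSubst (Δ : Ctx) (M : Tm) (k : ℕ) (V : Tm) (α : PTy) (m : ℕ) : Prop :=
  ∃ σ Γ Θ mM mV, Deriv (Γ.insertAt k σ) M α mM ∧ Deriv Θ V (.ofC σ) mV ∧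
    CtxEq (Ctx.tens Γ Θ) Δ ∧ m = mM + mV

theorem sum_two_mul_pos {k : ℕ} (hk : 0 < k) {nf : Fin k → ℕ} (hnf : ∀ i, 0 < nf i) :
    0 < ∑ i, 2 * nf i :=
  Finset.sum_pos (fun i _ => Nat.mul_pos two_pos (hnf i)) ⟨⟨0, hk⟩, Finset.mem_univ _⟩

namespace AntiSubst

variable {Δ : Ctx} {M N V : Tm} {k : ℕ} {α : PTy} {m : ℕ}

theorem congr {Δ' : Ctx} {α' : PTy} (h : AntiSubst Δ M k V α m) (hΔ : CtxEq Δ Δ')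
    (hα : PEq α α') : AntiSubst Δ' M k V α' m :=
  have ⟨σ, Γ, Θ, mM, mV, hM, hV, hΓΘ, hm⟩ := h
  ⟨σ, Γ, Θ, mM, mV, hM.eqv (.refl _) hα, hV, hΓΘ.trans hΔ, hm⟩

theorem var {x : ℕ} (hV : IsValue V) (h : Deriv Δ (substTm (.var x) k V) α m) :
    AntiSubst Δ (.var x) k V α m := by
  by_cases hxk : x = k
  · subst hxk
    simp only [substTm, if_true] at h
    obtain ⟨σ, rfl⟩ := h.exists_eq_ofC_of_isValue hV
    exact ⟨σ, Ctx.empty, Δ, 0, m, Ctx.insertAt_empty x σ ▸ .ax x σ, h, Ctx.empty_tens Δ,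
      (zero_add m).symm⟩
  · have hx : substTm (.var x) k V = .var (if k < x then x - 1 else x) := by
      simp only [substTm, if_neg hxk]; split <;> rfl
    rw [hx] at h
    obtain ⟨τ, hΔ, hα, rfl⟩ := h.var_inv
    refine ⟨.one, _, Ctx.empty, 0, 0, (Deriv.ax x τ).congr ?_ hα rfl, .one_of_isValue hV,
      (Ctx.tens_empty _).trans hΔ, rfl⟩
    rw [Ctx.insertAt_one_single hxk]
    exact .refl _

theorem lam (hV : IsValue V) {n : ℕ} {Δs : Fin n → Ctx} {τ : Fin n → CTy} {β : Fin n → PTy}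
    {ms : Fin n → ℕ}
    (h : ∀ i, AntiSubst (Ctx.cons (τ i) (Δs i)) M (k + 1) (shiftTm 0 V) (β i) (ms i)) :
    AntiSubst (tensCtxFin n Δs) (.lam M) k V (.ofC (tensFin n fun i => .arr (τ i) (β i)))
      (∑ i, ms i) := by
  choose σ Γ Θ mM mV hM hV' hΓΘ hm using h
  have hΘ := fun i => (hV' i).of_shiftTm
  -- the bound variable of the `i`-th premise gets its type from `Γ i`, since `Θ i` ignores it
  have hτ : ∀ i, CEq (Γ i 0) (τ i) := fun i =>
    (CEq.unit _).symm.trans ((CEq.tensCongr (.refl _) (hΘ i).2.symm).trans (hΓΘ i 0))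
  have hlam := Deriv.lamI n (fun i => ((Γ i).removeAt 0).insertAt k (σ i)) (fun i => Γ i 0) β mM M
    fun i => Ctx.insertAt_succ k (σ i) (Γ i) ▸ hM i
  rw [Ctx.insertAt_tensCtxFin] at hlam
  refine ⟨tensFin n σ, tensCtxFin n fun i => (Γ i).removeAt 0,
    tensCtxFin n fun i => (Θ i).removeAt 0, ∑ i, mM i, ∑ i, mV i,
    hlam.eqv (.refl _) (.ofC (tensFin_congr fun i => .arrCongr (hτ i) (.refl _))),
    .tensFin_of_isValue hV fun i => (hΘ i).1, ?_, ?_⟩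
  · refine (tensCtxFin_tens _ _).symm.trans (tensCtxFin_congr fun i p => ?_)
    exact hΓΘ i (p + 1)
  · simp only [hm, Finset.sum_add_distrib]

theorem app (hV : IsValue V) {n : ℕ} (hn : 0 < n) {nf : Fin n → ℕ} (hnf : ∀ i, 0 < nf i)
    {τ : ∀ i, Fin (nf i) → CTy} {β : ∀ i, Fin (nf i) → PTy} {Δ₀ : Ctx} {Γ : Fin n → Ctx}
    {m₀ : ℕ} {ms : Fin n → ℕ}
    (hM : AntiSubst Δ₀ M k V
      (parFin n fun i => .ofC (tensFin (nf i) fun j => .arr (τ i j) (β i j))) m₀)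
    (hN : ∀ i, AntiSubst (Γ i) N k V (parFin (nf i) fun j => .ofC (τ i j)) (ms i)) :
    AntiSubst (Ctx.tens Δ₀ (tensCtxFin n Γ)) (.app M N) k V
      (parFin n fun i => parFin (nf i) (β i)) (m₀ + ∑ i, ms i + ∑ i, 2 * nf i - 1) := by
  obtain ⟨σ₀, Γ₀, Θ₀, mM₀, mV₀, hM, hV₀, hΓΘ₀, rfl⟩ := hM
  choose σ Γ' Θ mM mV hN hV' hΓΘ hm using hN
  have happ := Deriv.appE n hn nf hnf τ β _ _ mM₀ mM M N hM hN
  rw [Ctx.insertAt_tensCtxFin, Ctx.insertAt_tens] at happ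
  have := sum_two_mul_pos hn hnf
  refine ⟨_, _, Ctx.tens Θ₀ (tensCtxFin n Θ), _, mV₀ + ∑ i, mV i, happ,
    hV₀.tens_of_isValue hV (.tensFin_of_isValue hV hV'), ?_, ?_⟩
  · exact (Ctx.tens_tens_tens_comm _ _ _ _).trans
      (hΓΘ₀.tens ((tensCtxFin_tens _ _).symm.trans (tensCtxFin_congr hΓΘ)))
  · simp only [hm, Finset.sum_add_distrib]
    omega

theorem plusL (h : AntiSubst Δ M k V α m) (N : Tm) : AntiSubst Δ (.plus M N) k V α (m + 1) :=
  have ⟨σ, Γ, Θ, mM, mV, hM, hV, hΓΘ, hm⟩ := h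
  ⟨σ, Γ, Θ, mM + 1, mV, .plusL N hM, hV, hΓΘ, by omega⟩

theorem plusR (h : AntiSubst Δ N k V α m) (M : Tm) : AntiSubst Δ (.plus M N) k V α (m + 1) :=
  have ⟨σ, Γ, Θ, mM, mV, hN, hV, hΓΘ, hm⟩ := h
  ⟨σ, Γ, Θ, mM + 1, mV, .plusR M hN, hV, hΓΘ, by omega⟩

theorem par (hV : IsValue V) {Δ₁ Δ₂ : Ctx} {α₁ α₂ : PTy} {m₁ m₂ : ℕ}
    (h₁ : AntiSubst Δ₁ M k V α₁ m₁) (h₂ : AntiSubst Δ₂ N k V α₂ m₂) :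
    AntiSubst (Ctx.tens Δ₁ Δ₂) (.par M N) k V (.par α₁ α₂) (m₁ + m₂) := by
  obtain ⟨σ₁, Γ₁, Θ₁, mM₁, mV₁, hM₁, hV₁, hΓΘ₁, rfl⟩ := h₁
  obtain ⟨σ₂, Γ₂, Θ₂, mM₂, mV₂, hM₂, hV₂, hΓΘ₂, rfl⟩ := h₂
  have hMN := Deriv.parI hM₁ hM₂
  rw [Ctx.insertAt_tens] at hMN
  refine ⟨_, _, _, _, _, hMN, hV₁.tens_of_isValue hV hV₂,
    (Ctx.tens_tens_tens_comm _ _ _ _).trans (hΓΘ₁.tens hΓΘ₂), ?_⟩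
  omega

end AntiSubst

theorem Deriv.antiSubst {V : Tm} (hV : IsValue V) {M : Tm} {k : ℕ} {Δ : Ctx} {α : PTy} {m : ℕ}
    (h : Deriv Δ (substTm M k V) α m) : AntiSubst Δ M k V α m := by
  induction M generalizing k V Δ α m with
  | var x => exact .var hV h
  | lam M ih =>
    obtain ⟨n, Δs, τ, β, ms, hM, hΔ, hα, rfl⟩ := h.lam_inv
    exact (AntiSubst.lam hV fun i => ih (hV.shiftTm 0) (hM i)).congr hΔ hα
  | app M N ihM ihN =>
    obtain ⟨n, nf, τ, β, Δ₀, Γ, m₀, ms, hn, hnf, hM, hN, hΔ, hα, rfl⟩ := h.app_inv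
    exact (AntiSubst.app hV hn hnf (ihM hV hM) fun i => ihN hV (hN i)).congr hΔ hα
  | plus M N ihM ihN =>
    obtain ⟨m, rfl, h | h⟩ := h.plus_inv
    exacts [(ihM hV h).plusL N, (ihN hV h).plusR M]
  | par M N ihM ihN =>
    obtain ⟨Δ₁, Δ₂, α₁, α₂, m₁, m₂, h₁, h₂, hΔ, hα, rfl⟩ := h.par_inv
    exact (AntiSubst.par hV (ihM hV h₁) (ihN hV h₂)).congr hΔ hα

def Expands (M M' : Tm) : Prop := ∀ ⦃Δ α m⦄, Deriv Δ M' α m → Deriv Δ M α (m + 1)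

theorem expands_beta {M V : Tm} (hV : IsValue V) : Expands (.app (.lam M) V) (substTm M 0 V) := by
  intro Δ α m h
  obtain ⟨σ, Γ, Θ, mM, mV, hM, hV', hΓΘ, rfl⟩ := h.antiSubst hV
  have hlam := Deriv.lamI 1 (fun _ => Γ) (fun _ => σ) (fun _ => α) (fun _ => mM) M
    fun _ => Ctx.insertAt_zero σ Γ ▸ hM
  have happ := Deriv.appE 1 one_pos (fun _ => 1) (fun _ => one_pos) (fun _ _ => σ) (fun _ _ => α)
    _ (fun _ => Θ) _ (fun _ => mV) (.lam M) V hlam fun _ => hV'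
  exact happ.congr (((tensCtxFin_one _).tens (tensCtxFin_one _)).trans hΓΘ) (.refl _)
    (by simp)

theorem expands_parAppL (M N P : Tm) :
    Expands (.app (.par M N) P) (.par (.app M P) (.app N P)) := by
  intro Δ α m h
  obtain ⟨Δ₁, Δ₂, α₁, α₂, m₁, m₂, h₁, h₂, hΔ, hα, rfl⟩ := h.par_inv
  obtain ⟨k₁, nf₁, τ₁, β₁, Δ₀₁, Γ₁, m₀₁, ms₁, hk₁, hnf₁, hM, hP₁, hΔ₁, hα₁, rfl⟩ := h₁.app_inv
  obtain ⟨k₂, nf₂, τ₂, β₂, Δ₀₂, Γ₂, m₀₂, ms₂, hk₂, hnf₂, hN, hP₂, hΔ₂, hα₂, rfl⟩ := h₂.app_inv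
  -- the branches of both applications, each packed with its arity, so that they can be appended
  let F₁ : Fin k₁ → Σ n, Fin n → CTy × PTy := fun i => ⟨nf₁ i, fun j => (τ₁ i j, β₁ i j)⟩
  let F₂ : Fin k₂ → Σ n, Fin n → CTy × PTy := fun i => ⟨nf₂ i, fun j => (τ₂ i j, β₂ i j)⟩
  let F := Fin.append F₁ F₂
  have hMN : Deriv (Ctx.tens Δ₀₁ Δ₀₂) (.par M N)
      (parFin (k₁ + k₂) fun i => .ofC (tensFin (F i).1 fun j => .arr ((F i).2 j).1 ((F i).2 j).2))
      (m₀₁ + m₀₂) :=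
    (Deriv.parI hM hN).eqv (.refl _) (parFin_comp_append hk₁ hk₂
      (fun b => .ofC (tensFin b.1 fun j => .arr (b.2 j).1 (b.2 j).2)) F₁ F₂).symm
  have hnf : ∀ i, 0 < (F i).1 := Fin.addCases
    (fun i => by rw [show F (Fin.castAdd k₂ i) = F₁ i from Fin.append_left _ _ i]; exact hnf₁ i)
    (fun i => by rw [show F (Fin.natAdd k₁ i) = F₂ i from Fin.append_right _ _ i]; exact hnf₂ i)
  have hP : ∀ i, Deriv (Fin.append Γ₁ Γ₂ i) P (parFin (F i).1 fun j => .ofC ((F i).2 j).1)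
      (Fin.append ms₁ ms₂ i) := Fin.addCases
    (fun i => by
      rw [show F (Fin.castAdd k₂ i) = F₁ i from Fin.append_left _ _ i, Fin.append_left,
        Fin.append_left]
      exact hP₁ i)
    (fun i => by
      rw [show F (Fin.natAdd k₁ i) = F₂ i from Fin.append_right _ _ i, Fin.append_right,
        Fin.append_right]
      exact hP₂ i)
  have happ := Deriv.appE (k₁ + k₂) (by omega) (fun i => (F i).1) hnf (fun i j => ((F i).2 j).1)
    (fun i j => ((F i).2 j).2) _ _ _ _ _ _ hMN hP
  have := sum_two_mul_pos hk₁ hnf₁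
  have := sum_two_mul_pos hk₂ hnf₂
  refine happ.congr ?_ ((parFin_comp_append hk₁ hk₂
      (fun b => parFin b.1 fun j => (b.2 j).2) F₁ F₂).trans ((hα₁.parCongr hα₂).trans hα)) ?_
  · exact ((CtxEq.refl _).tens (tensCtxFin_append Γ₁ Γ₂)).trans
      ((Ctx.tens_tens_tens_comm _ _ _ _).trans ((hΔ₁.tens hΔ₂).trans hΔ))
  · simp [Fin.sum_univ_add, F, F₁, F₂]
    omega

theorem expands_parAppR {V : Tm} (hV : IsValue V) (M N : Tm) :
    Expands (.app V (.par M N)) (.par (.app V M) (.app V N)) := by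
  intro Δ α m h
  obtain ⟨Δ₁, Δ₂, α₁, α₂, m₁, m₂, h₁, h₂, hΔ, hα, rfl⟩ := h.par_inv
  obtain ⟨k₁, nf₁, τ₁, β₁, Δ₀₁, Γ₁, m₀₁, ms₁, hk₁, hnf₁, hV₁, hM, hΔ₁, hα₁, rfl⟩ := h₁.app_inv
  obtain ⟨k₂, nf₂, τ₂, β₂, Δ₀₂, Γ₂, m₀₂, ms₂, hk₂, hnf₂, hV₂, hN, hΔ₂, hα₂, rfl⟩ := h₂.app_inv
  obtain rfl := hV₁.eq_one_of_isValue hk₁ hV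
  obtain rfl := hV₂.eq_one_of_isValue hk₂ hV
  let p₁ : Fin (nf₁ 0) → CTy × PTy := fun j => (τ₁ 0 j, β₁ 0 j)
  let p₂ : Fin (nf₂ 0) → CTy × PTy := fun j => (τ₂ 0 j, β₂ 0 j)
  let p := Fin.append p₁ p₂
  have hVV : Deriv (Ctx.tens Δ₀₁ Δ₀₂) V
      (parFin 1 fun _ => .ofC (tensFin (nf₁ 0 + nf₂ 0) fun j => .arr (p j).1 (p j).2))
      (m₀₁ + m₀₂) :=
    (hV₁.tens_of_isValue hV hV₂).eqv (.refl _)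
      (.ofC (tensFin_comp_append (fun q : CTy × PTy => .arr q.1 q.2) p₁ p₂).symm)
  have hMN : Deriv (Ctx.tens (Γ₁ 0) (Γ₂ 0)) (.par M N)
      (parFin (nf₁ 0 + nf₂ 0) fun j => .ofC (p j).1) (ms₁ 0 + ms₂ 0) :=
    (Deriv.parI (hM 0) (hN 0)).eqv (.refl _)
      (parFin_comp_append (hnf₁ 0) (hnf₂ 0) (fun q : CTy × PTy => .ofC q.1) p₁ p₂).symm
  have happ := Deriv.appE 1 one_pos (fun _ => nf₁ 0 + nf₂ 0) (fun _ => by have := hnf₁ 0; omega)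
    (fun _ j => (p j).1) (fun _ j => (p j).2) _ (fun _ => Ctx.tens (Γ₁ 0) (Γ₂ 0)) _
    (fun _ => ms₁ 0 + ms₂ 0) V (.par M N) hVV fun _ => hMN
  have := hnf₁ 0
  have := hnf₂ 0
  refine happ.congr ?_
    ((parFin_comp_append (hnf₁ 0) (hnf₂ 0) (fun q : CTy × PTy => q.2) p₁ p₂).trans
      ((hα₁.parCongr hα₂).trans hα)) ?_
  · exact ((CtxEq.refl _).tens (tensCtxFin_one _)).trans ((Ctx.tens_tens_tens_comm _ _ _ _).trans
      ((((CtxEq.refl _).tens (tensCtxFin_one Γ₁).symm).tens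
        ((CtxEq.refl _).tens (tensCtxFin_one Γ₂).symm)).trans ((hΔ₁.tens hΔ₂).trans hΔ)))
  · simp
    omega

namespace Expands

variable {M M' : Tm}

theorem par_left (h : Expands M M') (N : Tm) : Expands (.par M N) (.par M' N) := by
  intro Δ α m hd
  obtain ⟨Δ₁, Δ₂, α₁, α₂, m₁, m₂, h₁, h₂, hΔ, hα, rfl⟩ := hd.par_inv
  exact (Deriv.parI (h h₁) h₂).congr hΔ hα (by omega)

theorem par_right (h : Expands M M') (N : Tm) : Expands (.par N M) (.par N M') := by
  intro Δ α m hd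
  obtain ⟨Δ₁, Δ₂, α₁, α₂, m₁, m₂, h₁, h₂, hΔ, hα, rfl⟩ := hd.par_inv
  exact (Deriv.parI h₁ (h h₂)).congr hΔ hα (by omega)

theorem app_left (h : Expands M M') (N : Tm) : Expands (.app M N) (.app M' N) := by
  intro Δ α m hd
  obtain ⟨k, nf, τ, β, Δ₀, Γ, m₀, ms, hk, hnf, hM, hN, hΔ, hα, rfl⟩ := hd.app_inv
  have := sum_two_mul_pos hk hnf
  exact (Deriv.appE k hk nf hnf τ β Δ₀ Γ _ ms M N (h hM) hN).congr hΔ hα (by omega)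

theorem app_right {V : Tm} (hV : IsValue V) (h : Expands M M') :
    Expands (.app V M) (.app V M') := by
  intro Δ α m hd
  obtain ⟨k, nf, τ, β, Δ₀, Γ, m₀, ms, hk, hnf, hV', hM, hΔ, hα, rfl⟩ := hd.app_inv
  obtain rfl := hV'.eq_one_of_isValue hk hV
  have := hnf 0
  exact (Deriv.appE 1 hk nf hnf τ β Δ₀ Γ m₀ (fun i => ms i + 1) V M hV' fun i => h (hM i)).congr
    hΔ hα (by simp; omega)

end Expands

theorem subject_expansion (b : Bool) (M N : Tm) (Δ : Ctx) (α : PTy) (m : ℕ)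
    (hstep : Step b M N) (hπ : Deriv Δ N α m) : Deriv Δ M α (m + 1) := by
  suffices h : Expands M N from h hπ
  clear hπ
  induction hstep with
  | beta hV => exact expands_beta hV
  | plusL M N => exact fun _ _ _ => .plusL N
  | plusR M N => exact fun _ _ _ => .plusR M
  | parAppL M N P => exact expands_parAppL M N P
  | parAppR M N hV => exact expands_parAppR hV M N
  | parL N _ ih => exact ih.par_left N
  | parR M _ ih => exact ih.par_right M
  | appL N _ _ ih => exact ih.app_left N
  | appR hV _ _ ih => exact ih.app_right hV
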